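/- Let A be a finite-dimensional algebra over a field, let u : X → ⊕_{i=1}^r X_i^{n_i} be a left minimal almost split morphism with X, X₁, …, X_r indecomposable and pairwise nonisomorphic, with components u_{i,j} : X → X_i. Then for each i, the residue classes (ū_{i,1}, …, ū_{i,n_i}) in irr(X, X_i) = rad(X,X_i)/rad²(X,X_i) form a basis of irr(X, X_i) as a right vector space over the division ring κ_{X_i} = End_A(X_i)/rad(X_i,X_i). -/

import Mathlib

/-!
Since `A` is artinian, Fitting's lemma makes the endomorphism ring of a finitely generated
indecomposable module local, so the non-isomorphisms form an ideal and `rad` is closed under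
sums. Write `σₚ`, `πₚ` for the inclusions and projections of the product, so `uₚ = u ≫ πₚ`.
A radical `f : X ⟶ Xᵢ` is not a split mono, hence `f = u ≫ g`; with `cⱼ = σᵢⱼ ≫ g` and
`D = g - ∑ πᵢⱼ ≫ cⱼ`, the remainder `f - ∑ uᵢⱼ ≫ cⱼ = ∑ₚ uₚ ≫ (σₚ ≫ D)` lies in `rad²`, as
`σₚ ≫ D` vanishes on the `i`-th block and is a map between non-isomorphic indecomposables
elsewhere. Conversely, if `∑ uᵢⱼ ≫ cⱼ ∈ rad²` then it equals `u ≫ w` with `w` radical, so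
`Φ = ∑ πᵢⱼ ≫ cⱼ - w` satisfies `u ≫ Φ = 0`; were `cⱼ` invertible, `σᵢⱼ ≫ Φ` would be too, and
`𝟙 - Φ ≫ (σᵢⱼ ≫ Φ)⁻¹ ≫ σᵢⱼ` would fix `u` without being invertible, against left minimality.
-/

open CategoryTheory

universe v u

/-- A finitely generated module object is indecomposable: nontrivial and
its only idempotent endomorphisms are `0` and the identity. -/
def IsIndecO (A : Type u) [Ring A] (M : ModuleCat.{v} A) : Prop :=
  Nontrivial M ∧ ∀ e : M ⟶ M, e ≫ e = e → e = 0 ∨ e = 𝟙 M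

/-- `f` lies in the radical of the category of finitely generated modules. -/
def IsRad (A : Type u) [Ring A] {M N : ModuleCat.{v} A} (f : M ⟶ N) : Prop :=
  ∀ X : ModuleCat.{v} A, Module.Finite A X → IsIndecO A X →
    ∀ (u : X ⟶ M) (v : N ⟶ X), ¬ IsIso (u ≫ f ≫ v)

/-- `IsRadPow A n f` : `f` lies in the `n`-th power of the radical. -/
def IsRadPow (A : Type u) [Ring A] : ∀ (_ : ℕ) {M N : ModuleCat.{v} A}, (M ⟶ N) → Prop
  | 0, _, _, _ => True
  | (n+1), M, N, f => ∃ (m : ℕ) (Z : Fin m → ModuleCat.{v} A)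
      (h : ∀ i, M ⟶ Z i) (g : ∀ i, Z i ⟶ N),
      (∀ i, IsRad A (h i)) ∧ (∀ i, IsRadPow A n (g i)) ∧ f = ∑ i, h i ≫ g i
/-- `u : X ⟶ Y` is left minimal almost split. -/
def IsLeftMinimalAlmostSplit (A : Type u) [Ring A] {X Y : ModuleCat.{v} A}
    (u : X ⟶ Y) : Prop :=
  (¬ ∃ r : Y ⟶ X, u ≫ r = 𝟙 X) ∧
  (∀ (Z : ModuleCat.{v} A) (f : X ⟶ Z), (¬ ∃ r : Z ⟶ X, f ≫ r = 𝟙 X) →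
      ∃ g : Y ⟶ Z, u ≫ g = f) ∧
  (∀ h : Y ⟶ Y, u ≫ h = u → IsIso h)

variable {A : Type u} [Ring A]

theorem not_isIso_zero {M N : ModuleCat.{v} A} [Nontrivial M] : ¬ IsIso (0 : M ⟶ N) := by
  intro h
  have : Subsingleton M := ModuleCat.subsingleton_of_isZero (Limits.IsZero.of_mono_zero M N)
  exact not_subsingleton M this

namespace IsIndecO

theorem isIso_of_comp_eq_id {M Z : ModuleCat.{v} A} (hM : IsIndecO A M) [Nontrivial Z]
    {a : Z ⟶ M} {t : M ⟶ Z} (hat : a ≫ t = 𝟙 Z) : IsIso a := by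
  have hidem : (t ≫ a) ≫ (t ≫ a) = t ≫ a := by
    rw [Category.assoc, reassoc_of% hat]
  rcases hM.2 _ hidem with h0 | h1
  · have hid : 𝟙 Z = 0 :=
      calc 𝟙 Z = (a ≫ t) ≫ (a ≫ t) := by rw [hat, Category.comp_id]
        _ = a ≫ (t ≫ a) ≫ t := by simp only [Category.assoc]
        _ = 0 := by rw [h0, Limits.zero_comp, Limits.comp_zero]
    exact (not_isIso_zero (hid ▸ (inferInstance : IsIso (𝟙 Z)))).elim
  · exact ⟨t, hat, h1⟩

theorem isIso_of_isIso_comp_comp {M N Z : ModuleCat.{v} A} (hM : IsIndecO A M)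
    (hN : IsIndecO A N) [Nontrivial Z] {a : Z ⟶ M} {g : M ⟶ N} {b : N ⟶ Z}
    (h : IsIso (a ≫ g ≫ b)) : IsIso g := by
  have : IsIso a := hM.isIso_of_comp_eq_id (t := g ≫ b ≫ inv (a ≫ g ≫ b))
    (by simpa only [Category.assoc] using IsIso.hom_inv_id (a ≫ g ≫ b))
  have := hM.1
  refine hN.isIso_of_comp_eq_id (t := b ≫ inv (a ≫ g ≫ b) ≫ a) ?_
  rw [← cancel_epi a]
  simpa only [Category.assoc, Category.comp_id] using IsIso.hom_inv_id_assoc (a ≫ g ≫ b) a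

theorem isUnit_or_isNilpotent {M : ModuleCat.{v} A} (hM : IsIndecO A M) [IsArtinian A M]
    [IsNoetherian A M] (f : Module.End A M) : IsUnit f ∨ IsNilpotent f := by
  obtain ⟨n, hcompl, hn⟩ :=
    (f.eventually_isCompl_ker_pow_range_pow.and (Filter.eventually_ne_atTop 0)).exists
  set e := (LinearMap.range (f ^ n)).projection (LinearMap.ker (f ^ n)) hcompl.symm
  have he : ModuleCat.ofHom e ≫ ModuleCat.ofHom e = ModuleCat.ofHom e := by
    rw [← ModuleCat.ofHom_comp]
    exact congrArg ModuleCat.ofHom (Submodule.isIdempotentElem_projection _)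
  rcases hM.2 _ he with h0 | h1
  · replace h0 : e = 0 := congrArg ModuleCat.Hom.hom h0
    have hrange : LinearMap.range (f ^ n) = ⊥ := by
      rw [← Submodule.range_projection hcompl.symm]
      exact LinearMap.range_eq_bot.mpr h0
    exact .inr ⟨n, LinearMap.range_eq_bot.mp hrange⟩
  · replace h1 : e = LinearMap.id := congrArg ModuleCat.Hom.hom h1
    have hker : LinearMap.ker (f ^ n) = ⊥ := by
      rw [← Submodule.ker_projection hcompl.symm]
      change LinearMap.ker e = ⊥
      rw [h1, LinearMap.ker_id]
    have hbij := IsArtinian.bijective_of_injective_endomorphism _ (LinearMap.ker_eq_bot.mp hker)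
    exact .inl ((isUnit_pow_iff hn).mp ((Module.End.isUnit_iff _).mpr hbij))

theorem isLocalRing_end [IsArtinianRing A] {M : ModuleCat.{v} A} (hM : IsIndecO A M)
    (hfg : Module.Finite A M) : IsLocalRing (End M) := by
  have := hM.1
  have : Nontrivial (End M) :=
    ⟨⟨𝟙 M, 0, fun h => not_isIso_zero (h ▸ (inferInstance : IsIso (𝟙 M)))⟩⟩
  refine .of_isUnit_or_isUnit_one_sub_self fun a => ?_
  let φ := ModuleCat.endRingEquiv M
  rcases hM.isUnit_or_isNilpotent (φ a) with h | h
  · exact .inl ((MulEquiv.isUnit_map φ).mp h)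
  · exact .inr (by simpa using (h.map φ.symm).isUnit_one_sub)

theorem not_isIso_add [IsArtinianRing A] {M : ModuleCat.{v} A} (hM : IsIndecO A M)
    (hfg : Module.Finite A M) {f g : M ⟶ M} (hf : ¬ IsIso f) (hg : ¬ IsIso g) :
    ¬ IsIso (f + g) := by
  have := hM.isLocalRing_end hfg
  simp only [← isUnit_iff_isIso] at hf hg ⊢
  exact IsLocalRing.nonunits_add hf hg

theorem isIso_sub [IsArtinianRing A] {M : ModuleCat.{v} A} (hM : IsIndecO A M)
    (hfg : Module.Finite A M) {f g : M ⟶ M} (hf : IsIso f) (hg : ¬ IsIso g) :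
    IsIso (f - g) := by
  by_contra h
  exact hM.not_isIso_add hfg h hg (by rwa [sub_add_cancel])

end IsIndecO

namespace IsRad

variable {L M N P : ModuleCat.{v} A}

theorem comp {f : M ⟶ N} (hf : IsRad A f) (g : N ⟶ P) : IsRad A (f ≫ g) :=
  fun X hfg hX a b => by simpa only [Category.assoc] using hf X hfg hX a (g ≫ b)

theorem precomp {f : M ⟶ N} (hf : IsRad A f) (g : L ⟶ M) : IsRad A (g ≫ f) :=
  fun X hfg hX a b => by simpa only [Category.assoc] using hf X hfg hX (a ≫ g) b

theorem zero : IsRad A (0 : M ⟶ N) := fun X _ hX a b => by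
  have := hX.1
  simpa only [Limits.zero_comp, Limits.comp_zero] using not_isIso_zero

theorem add [IsArtinianRing A] {f g : M ⟶ N} (hf : IsRad A f) (hg : IsRad A g) :
    IsRad A (f + g) := fun X hfg hX a b => by
  simpa only [Preadditive.add_comp, Preadditive.comp_add] using
    hX.not_isIso_add hfg (hf X hfg hX a b) (hg X hfg hX a b)

theorem sum [IsArtinianRing A] {ι : Type*} (s : Finset ι) {f : ι → (M ⟶ N)}
    (hf : ∀ i ∈ s, IsRad A (f i)) : IsRad A (∑ i ∈ s, f i) := by
  classical
  induction s using Finset.induction_on with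
  | empty => simpa only [Finset.sum_empty] using zero
  | insert a s ha ih =>
    rw [Finset.sum_insert ha]
    exact (hf a (Finset.mem_insert_self a s)).add
      (ih fun i hi => hf i (Finset.mem_insert_of_mem hi))

theorem not_exists_retraction {f : M ⟶ N} (hf : IsRad A f) (hfg : Module.Finite A M)
    (hM : IsIndecO A M) : ¬ ∃ r : N ⟶ M, f ≫ r = 𝟙 M := by
  rintro ⟨r, hr⟩
  exact hf M hfg hM (𝟙 M) r (by rw [Category.id_comp, hr]; infer_instance)

theorem not_isIso {f : M ⟶ N} (hf : IsRad A f) (hfg : Module.Finite A M)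
    (hM : IsIndecO A M) : ¬ IsIso f :=
  fun _ => hf.not_exists_retraction hfg hM ⟨inv f, IsIso.hom_inv_id f⟩

theorem isRadPow_one {f : M ⟶ N} (hf : IsRad A f) : IsRadPow A 1 f :=
  ⟨1, fun _ => N, fun _ => f, fun _ => 𝟙 N, fun _ => hf, fun _ => trivial, by simp⟩

end IsRad

theorem isRad_of_not_isIso {M N : ModuleCat.{v} A} (hM : IsIndecO A M) (hN : IsIndecO A N)
    {g : M ⟶ N} (hg : ¬ IsIso g) : IsRad A g :=
  fun _ _ hZ _ _ h => have := hZ.1; hg (hM.isIso_of_isIso_comp_comp hN h)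

theorem isRadPow_succ_sum {n : ℕ} {ι : Type*} [Fintype ι] {M N : ModuleCat.{v} A}
    {Z : ι → ModuleCat.{v} A} (h : ∀ p, M ⟶ Z p) (g : ∀ p, Z p ⟶ N)
    (hh : ∀ p, IsRad A (h p)) (hg : ∀ p, IsRadPow A n (g p)) :
    IsRadPow A (n + 1) (∑ p, h p ≫ g p) :=
  let e := (Fintype.equivFin ι).symm
  ⟨Fintype.card ι, fun t => Z (e t), fun t => h (e t), fun t => g (e t), fun t => hh (e t),
    fun t => hg (e t), (e.sum_comp fun p => h p ≫ g p).symm⟩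

theorem IsRadPow.isRad [IsArtinianRing A] {n : ℕ} {M N : ModuleCat.{v} A} {f : M ⟶ N}
    (hf : IsRadPow A (n + 1) f) : IsRad A f := by
  obtain ⟨m, Z, h, g, hh, -, rfl⟩ := hf
  exact IsRad.sum _ fun t _ => (hh t).comp (g t)

namespace IsLeftMinimalAlmostSplit

variable {X Y : ModuleCat.{v} A} {u : X ⟶ Y}

theorem exists_isRad_comp_eq_of_isRadPow_two [IsArtinianRing A]
    (hu : IsLeftMinimalAlmostSplit A u) (hfg : Module.Finite A X) (hX : IsIndecO A X)
    {N : ModuleCat.{v} A} {f : X ⟶ N} (hf : IsRadPow A 2 f) :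
    ∃ w : Y ⟶ N, IsRad A w ∧ u ≫ w = f := by
  obtain ⟨m, Z, h, g, hh, hg, rfl⟩ := hf
  choose w hw using fun t => hu.2.1 (Z t) (h t) ((hh t).not_exists_retraction hfg hX)
  refine ⟨∑ t, w t ≫ g t, IsRad.sum _ fun t _ => (hg t).isRad.precomp (w t), ?_⟩
  simp only [Preadditive.comp_sum, ← Category.assoc, hw]

theorem not_isIso_comp_of_comp_eq_zero (hu : IsLeftMinimalAlmostSplit A u)
    {N : ModuleCat.{v} A} [Nontrivial N] {φ : Y ⟶ N} (hφ : u ≫ φ = 0) (s : N ⟶ Y) :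
    ¬ IsIso (s ≫ φ) := by
  intro hs
  set h := 𝟙 Y - φ ≫ inv (s ≫ φ) ≫ s
  have hfix : u ≫ h = u := by
    rw [Preadditive.comp_sub, reassoc_of% hφ, Limits.zero_comp, sub_zero, Category.comp_id]
  have := hu.2.2 h hfix
  have hsh : s ≫ h = 0 := by
    rw [Preadditive.comp_sub, Category.comp_id, ← Category.assoc, IsIso.hom_inv_id_assoc,
      sub_self]
  have hs0 : s = 0 := (cancel_mono h).mp (by rw [hsh, Limits.zero_comp])
  rw [hs0, Limits.zero_comp] at hs
  exact not_isIso_zero hs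

end IsLeftMinimalAlmostSplit

section PiModule

variable {ι : Type} (M : ι → ModuleCat.{v} A)

def piIncl [DecidableEq ι] (p : ι) : M p ⟶ ModuleCat.of A (∀ q, M q) :=
  ModuleCat.ofHom (LinearMap.single A (fun q => M q) p)

def piProj (p : ι) : ModuleCat.of A (∀ q, M q) ⟶ M p :=
  ModuleCat.ofHom (LinearMap.proj p)

variable [DecidableEq ι]

theorem piIncl_piProj_self (p : ι) : piIncl M p ≫ piProj M p = 𝟙 (M p) := by
  ext x
  exact Pi.single_eq_same (M := fun q => M q) p x

theorem piIncl_piProj_of_ne {p q : ι} (h : p ≠ q) : piIncl M p ≫ piProj M q = 0 := by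
  ext x
  exact Pi.single_eq_of_ne (M := fun q => M q) h.symm x

theorem sum_piProj_piIncl [Fintype ι] : ∑ p, piProj M p ≫ piIncl M p = 𝟙 _ := by
  refine ModuleCat.hom_ext (LinearMap.ext fun x => ?_)
  simpa [ModuleCat.hom_sum, piIncl, piProj] using Finset.univ_sum_single (M := fun q => M q) x

theorem comp_eq_sum_piProj [Fintype ι] {X N : ModuleCat.{v} A}
    (u : X ⟶ ModuleCat.of A (∀ q, M q)) (g : ModuleCat.of A (∀ q, M q) ⟶ N) :
    u ≫ g = ∑ p, (u ≫ piProj M p) ≫ (piIncl M p ≫ g) := by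
  conv_lhs => rw [← Category.id_comp g, ← sum_piProj_piIncl M]
  simp only [Preadditive.sum_comp, Preadditive.comp_sum, Category.assoc]

theorem piIncl_comp_sum_piProj {κ : ι → Type} [∀ i, DecidableEq (κ i)] [∀ i, Fintype (κ i)]
    (M : ι → ModuleCat.{v} A) {N : ModuleCat.{v} A} (i : ι) (c : κ i → (M i ⟶ N)) (j : κ i) :
    piIncl (fun p : Σ i, κ i => M p.1) ⟨i, j⟩ ≫
      ∑ j', piProj (fun p : Σ i, κ i => M p.1) ⟨i, j'⟩ ≫ c j' = c j := by
  rw [Preadditive.comp_sum, Finset.sum_eq_single j]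
  · rw [← Category.assoc, piIncl_piProj_self, Category.id_comp]
  · intro j' _ hj'
    rw [← Category.assoc, piIncl_piProj_of_ne _ (by simpa using hj'.symm), Limits.zero_comp]
  · simp

end PiModule

section Components

variable {ι : Type} [DecidableEq ι] {κ : ι → Type} [∀ i, Fintype (κ i)]
  [∀ i, DecidableEq (κ i)] {X : ModuleCat.{v} A} {Xi : ι → ModuleCat.{v} A}
  {u : X ⟶ ModuleCat.of A (∀ p : Σ i, κ i, Xi p.1)}

namespace IsLeftMinimalAlmostSplit

theorem exists_isRadPow_two_sub_sum [Fintype ι] (hu : IsLeftMinimalAlmostSplit A u)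
    (hfg : Module.Finite A X) (hX : IsIndecO A X) (hXi : ∀ i, IsIndecO A (Xi i))
    (hpair : ∀ i j, i ≠ j → ¬ Nonempty (Xi i ≅ Xi j)) (hXXi : ∀ i, ¬ Nonempty (X ≅ Xi i))
    (i : ι) {f : X ⟶ Xi i} (hf : IsRad A f) :
    ∃ c : κ i → (Xi i ⟶ Xi i),
      IsRadPow A 2 (f - ∑ j, (u ≫ piProj (fun p : Σ i, κ i => Xi p.1) ⟨i, j⟩) ≫ c j) := by
  set σ := piIncl (fun p : Σ i, κ i => Xi p.1)
  set π := piProj (fun p : Σ i, κ i => Xi p.1)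
  obtain ⟨g, rfl⟩ := hu.2.1 _ f (hf.not_exists_retraction hfg hX)
  refine ⟨fun j => σ ⟨i, j⟩ ≫ g, ?_⟩
  set D := g - ∑ j, π ⟨i, j⟩ ≫ σ ⟨i, j⟩ ≫ g
  have hD : u ≫ g - ∑ j, (u ≫ π ⟨i, j⟩) ≫ σ ⟨i, j⟩ ≫ g = u ≫ D := by
    simp only [D, Preadditive.comp_sub, Preadditive.comp_sum, Category.assoc]
  have hσD : ∀ p, ¬ IsIso (σ p ≫ D) := by
    rintro ⟨a, b⟩
    by_cases hai : a = i
    · subst hai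
      have := (hXi a).1
      rw [Preadditive.comp_sub, piIncl_comp_sum_piProj, sub_self]
      exact not_isIso_zero
    · exact fun _ => hpair a i hai ⟨asIso (σ ⟨a, b⟩ ≫ D)⟩
  rw [hD, comp_eq_sum_piProj]
  refine isRadPow_succ_sum _ _ (fun p => isRad_of_not_isIso hX (hXi p.1) ?_)
    (fun p => (isRad_of_not_isIso (hXi p.1) (hXi i) (hσD p)).isRadPow_one)
  exact fun _ => hXXi p.1 ⟨asIso (u ≫ π p)⟩

theorem not_isIso_of_isRadPow_two_sum [IsArtinianRing A] (hu : IsLeftMinimalAlmostSplit A u)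
    (hfg : Module.Finite A X) (hX : IsIndecO A X) {i : ι} (hfgi : Module.Finite A (Xi i))
    (hXi : IsIndecO A (Xi i)) {c : κ i → (Xi i ⟶ Xi i)}
    (hc : IsRadPow A 2 (∑ j, (u ≫ piProj (fun p : Σ i, κ i => Xi p.1) ⟨i, j⟩) ≫ c j))
    (j : κ i) : ¬ IsIso (c j) := by
  set σ := piIncl (fun p : Σ i, κ i => Xi p.1)
  set π := piProj (fun p : Σ i, κ i => Xi p.1)
  intro hj
  obtain ⟨w, hw, huw⟩ := hu.exists_isRad_comp_eq_of_isRadPow_two hfg hX hc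
  have hΦ : u ≫ (∑ j', π ⟨i, j'⟩ ≫ c j' - w) = 0 := by
    simp only [Preadditive.comp_sub, Preadditive.comp_sum, ← Category.assoc, huw, sub_self]
  have hσΦ : IsIso (σ ⟨i, j⟩ ≫ (∑ j', π ⟨i, j'⟩ ≫ c j' - w)) := by
    rw [Preadditive.comp_sub, piIncl_comp_sum_piProj]
    exact hXi.isIso_sub hfgi hj ((hw.precomp _).not_isIso hfgi hXi)
  have := hXi.1
  exact hu.not_isIso_comp_of_comp_eq_zero hΦ _ hσΦ

end IsLeftMinimalAlmostSplit

end Components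

/-- The components `u_{i,j} : X ⟶ Xᵢ` of a left minimal almost split morphism
`u : X ⟶ ⊕ᵢ Xᵢ^{nᵢ}` (with `X, X₁, …, X_r` indecomposable, pairwise
nonisomorphic) induce, for each `i`, a basis of
`irr(X,Xᵢ) = rad(X,Xᵢ)/rad²(X,Xᵢ)` as a right vector space over
`κ_{Xᵢ} = End(Xᵢ)/rad(Xᵢ,Xᵢ)` : every radical morphism `X ⟶ Xᵢ` is, modulo
`rad²`, a right `End(Xᵢ)`-combination of the `u_{i,j}` (spanning), and a
combination lies in `rad²` only when all its coefficients are non-invertible,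
i.e. vanish in `κ_{Xᵢ}` (independence). -/
theorem stmt17 (k : Type u) [Field k] (A : Type u) [Ring A] [Algebra k A]
    [FiniteDimensional k A]
    (r : ℕ) (X : ModuleCat.{v} A) (Xi : Fin r → ModuleCat.{v} A) (ni : Fin r → ℕ)
    (hXfg : Module.Finite A X) (hXifg : ∀ i, Module.Finite A (Xi i))
    (hX : IsIndecO A X) (hXi : ∀ i, IsIndecO A (Xi i))
    (hpair : ∀ i j, i ≠ j → ¬ Nonempty (Xi i ≅ Xi j))
    (hXXi : ∀ i, ¬ Nonempty (X ≅ Xi i))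
    (u : X ⟶ ModuleCat.of A (∀ p : Σ i : Fin r, Fin (ni i), ↥(Xi p.1)))
    (hu : IsLeftMinimalAlmostSplit A u)
    (uc : ∀ i : Fin r, Fin (ni i) → (X ⟶ Xi i))
    (huc : ∀ (i : Fin r) (j : Fin (ni i)) (x : X),
      uc i j x = u x ⟨i, j⟩) :
    ∀ i : Fin r,
      (∀ f : X ⟶ Xi i, IsRad A f →
        ∃ c : Fin (ni i) → (Xi i ⟶ Xi i),
          IsRadPow A 2 (f - ∑ j, uc i j ≫ c j)) ∧
      (∀ c : Fin (ni i) → (Xi i ⟶ Xi i),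
        IsRadPow A 2 (∑ j, uc i j ≫ c j) → ∀ j, ¬ IsIso (c j)) := by
  intro i
  have : IsArtinianRing A := isArtinian_of_tower k inferInstance
  have huc' : ∀ j, uc i j = u ≫ piProj (fun p : Σ i : Fin r, Fin (ni i) => Xi p.1) ⟨i, j⟩ :=
    fun j => ModuleCat.hom_ext (LinearMap.ext (huc i j))
  simp only [huc']
  exact ⟨fun f hf => hu.exists_isRadPow_two_sub_sum hXfg hX hXi hpair hXXi i hf,
    fun c hc => hu.not_isIso_of_isRadPow_two_sum hXfg hX (hXifg i) (hXi i) hc⟩
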